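/- Let $u \in C^2_c(\mathbb{R}^d)$ be a twice continuously differentiable, compactly supported real-valued function. Then $\int_{\mathbb{R}^d} |\nabla u|^4 \, dx \leq C(d) \, \sup_{\mathbb{R}^d} |u|^2 \int_{\mathbb{R}^d} |\nabla^2 u|^2 \, dx$, where $|\nabla^2 u|^2 = \sum_{\alpha,\beta} (\partial_\alpha \partial_\beta u)^2$ and $C(d)$ depends only on the dimension. -/

import Mathlib

open MeasureTheory

lemma opnorm_sq_eq_sum {d : ℕ} (L : EuclideanSpace ℝ (Fin d) →L[ℝ] ℝ) :
    ‖L‖ ^ 2 = ∑ β, (L (EuclideanSpace.single β 1)) ^ 2 := by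
  set y := (InnerProductSpace.toDual ℝ (EuclideanSpace ℝ (Fin d))).symm L with hy
  have h1 : ‖L‖ = ‖y‖ := by rw [hy]; simp
  have h2 : ∀ β, L (EuclideanSpace.single β 1) = y β := by
    intro β
    have := InnerProductSpace.toDual_symm_apply (𝕜 := ℝ) (y := L) (x := EuclideanSpace.single β 1)
    rw [← hy] at this
    rw [← this]
    simp [real_inner_comm, EuclideanSpace.inner_single_right]
  simp only [h1, h2]
  rw [EuclideanSpace.norm_eq, Real.sq_sqrt (by positivity)]
  simp [sq_abs]

lemma hasCompactSupport_finset_sum {E : Type*} [TopologicalSpace E] {ι : Type*}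
    (s : Finset ι) (f : ι → E → ℝ) (h : ∀ i, HasCompactSupport (f i)) :
    HasCompactSupport (fun x => ∑ i ∈ s, f i x) := by
  classical
  induction s using Finset.induction with
  | empty => simp only [Finset.sum_empty]; exact HasCompactSupport.zero
  | insert _ _ hne ih =>
      simp only [Finset.sum_insert hne]
      exact (h _).add ih

/-- Hamilton-type interpolation inequality (Euclidean scalar case `i = 1`, `l = 2`):
for `u ∈ C²_c(ℝ^d)`,
`∫ |∇u|⁴ ≤ C(d) (sup |u|)² ∫ |∇²u|²`, where `|∇²u|² = ∑_{α,β} (∂_α ∂_β u)²`. -/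
theorem hamilton_interpolation (d : ℕ) :
    ∃ C : ℝ, 0 < C ∧
      ∀ u : EuclideanSpace ℝ (Fin d) → ℝ, ContDiff ℝ 2 u → HasCompactSupport u →
        ∫ x, ‖fderiv ℝ u x‖ ^ 4 ≤
          C * (⨆ x, |u x|) ^ 2 *
            ∫ x, ∑ α, ∑ β,
              (fderiv ℝ (fun y => fderiv ℝ u y (EuclideanSpace.single α 1)) x
                  (EuclideanSpace.single β 1)) ^ 2 := by
  classical
  refine ⟨((d : ℝ) * (2 * d + 1) + 1) ^ 2, by positivity, ?_⟩
  intro u hu hc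
  set c : ℝ := (d : ℝ) * (2 * d + 1) + 1 with hc_def
  have hcpos : (0 : ℝ) < c := by positivity
  have hud : Differentiable ℝ u := hu.differentiable (by norm_num)
  have hfd : ContDiff ℝ 1 (fderiv ℝ u) := hu.fderiv_right (by norm_num)
  set e : Fin d → EuclideanSpace ℝ (Fin d) := fun α => EuclideanSpace.single α 1 with he_def
  set v : Fin d → EuclideanSpace ℝ (Fin d) → ℝ := fun α x => fderiv ℝ u x (e α) with hv_def
  have hv : ∀ α, ContDiff ℝ 1 (v α) := fun α =>
    (ContinuousLinearMap.apply ℝ ℝ (e α)).contDiff.comp hfd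
  have hvc : ∀ α, Continuous (v α) := fun α => (hv α).continuous
  have hvd : ∀ α, Differentiable ℝ (v α) := fun α => (hv α).differentiable (by norm_num)
  have hsv : ∀ α, HasCompactSupport (v α) := fun α => hc.fderiv_apply ℝ (e α)
  set w : Fin d → Fin d → EuclideanSpace ℝ (Fin d) → ℝ :=
    fun α β x => fderiv ℝ (v α) x (e β) with hw_def
  have hwc : ∀ α β, Continuous (w α β) := fun α β =>
    (ContinuousLinearMap.apply ℝ ℝ (e β)).continuous.comp ((hv α).continuous_fderiv (by norm_num))
  have hsw : ∀ α β, HasCompactSupport (w α β) := fun α β => (hsv α).fderiv_apply ℝ (e β)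
  -- the squared gradient
  set G : EuclideanSpace ℝ (Fin d) → ℝ := fun x => ∑ β, v β x * v β x with hG_def
  have hGc : Continuous G := continuous_finset_sum _ fun β _ => (hvc β).mul (hvc β)
  have hGnn : ∀ x, 0 ≤ G x := fun x => Finset.sum_nonneg fun β _ => mul_self_nonneg _
  have hG_norm : ∀ x, ‖fderiv ℝ u x‖ ^ 2 = G x := by
    intro x
    rw [opnorm_sq_eq_sum (fderiv ℝ u x)]
    simp only [hG_def, sq]
    rfl
  have hsG : HasCompactSupport G := by
    have h1 : HasCompactSupport (fun x => ‖fderiv ℝ u x‖ ^ 2) :=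
      (hc.fderiv ℝ).comp_left (g := fun L : _ →L[ℝ] ℝ => ‖L‖ ^ 2) (by simp)
    have h2 : (fun x => ‖fderiv ℝ u x‖ ^ 2) = G := funext fun x => hG_norm x
    rwa [h2] at h1
  -- the squared Hessian
  set W : EuclideanSpace ℝ (Fin d) → ℝ := fun x => ∑ α, ∑ β, w α β x ^ 2 with hW_def
  have hWc : Continuous W :=
    continuous_finset_sum _ fun α _ => continuous_finset_sum _ fun β _ => (hwc α β).pow 2
  have hWnn : ∀ x, 0 ≤ W x := fun x =>
    Finset.sum_nonneg fun α _ => Finset.sum_nonneg fun β _ => sq_nonneg _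
  have hw_le : ∀ α β x, |w α β x| ≤ Real.sqrt (W x) := by
    intro α β x
    apply Real.abs_le_sqrt
    calc w α β x ^ 2 ≤ ∑ β', w α β' x ^ 2 :=
          Finset.single_le_sum (f := fun β' => w α β' x ^ 2) (fun β' _ => sq_nonneg _)
            (Finset.mem_univ β)
      _ ≤ W x := Finset.single_le_sum
          (f := fun α' => ∑ β', w α' β' x ^ 2)
          (fun α' _ => Finset.sum_nonneg fun β' _ => sq_nonneg _) (Finset.mem_univ α)
  have hv_le : ∀ α β x, |v α x * v β x| ≤ G x := by
    intro α β x
    have hα : v α x * v α x ≤ G x :=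
      Finset.single_le_sum (f := fun γ => v γ x * v γ x)
        (fun γ _ => mul_self_nonneg _) (Finset.mem_univ α)
    have hβ : v β x * v β x ≤ G x :=
      Finset.single_le_sum (f := fun γ => v γ x * v γ x)
        (fun γ _ => mul_self_nonneg _) (Finset.mem_univ β)
    rw [abs_mul]
    nlinarith [abs_nonneg (v α x), abs_nonneg (v β x), sq_abs (v α x), sq_abs (v β x),
      sq_nonneg (|v α x| - |v β x|)]
  -- derivatives
  have hGfd : ∀ x, HasFDerivAt G
      (∑ β, (v β x • fderiv ℝ (v β) x + v β x • fderiv ℝ (v β) x)) x := by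
    intro x
    have h : ∀ β ∈ Finset.univ, HasFDerivAt (fun y => v β y * v β y)
        (v β x • fderiv ℝ (v β) x + v β x • fderiv ℝ (v β) x) x := fun β _ =>
      ((hvd β x).hasFDerivAt).mul ((hvd β x).hasFDerivAt)
    exact HasFDerivAt.fun_sum h
  have hGd : Differentiable ℝ G := fun x => (hGfd x).differentiableAt
  set D : Fin d → EuclideanSpace ℝ (Fin d) → ℝ := fun α x =>
    v α x * (∑ β, (v β x * w β α x + v β x * w β α x)) + G x * w α α x with hD_def
  have hPfd : ∀ α x, HasFDerivAt (fun y => v α y * G y)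
      (v α x • (∑ β, (v β x • fderiv ℝ (v β) x + v β x • fderiv ℝ (v β) x))
        + G x • fderiv ℝ (v α) x) x :=
    fun α x => ((hvd α x).hasFDerivAt).mul (hGfd x)
  have hPd : ∀ α, Differentiable ℝ (fun y => v α y * G y) :=
    fun α x => (hPfd α x).differentiableAt
  have hfderivP : ∀ α x, fderiv ℝ (fun y => v α y * G y) x (e α) = D α x := by
    intro α x
    rw [(hPfd α x).fderiv]
    simp only [ContinuousLinearMap.add_apply, ContinuousLinearMap.smul_apply,
      ContinuousLinearMap.coe_sum', Finset.sum_apply, smul_eq_mul, hD_def, hw_def]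
  have hDc : ∀ α, Continuous (D α) := by
    intro α
    apply Continuous.add
    · exact (hvc α).mul (continuous_finset_sum _ fun β _ =>
        ((hvc β).mul (hwc β α)).add ((hvc β).mul (hwc β α)))
    · exact hGc.mul (hwc α α)
  -- integrability
  have hInt : ∀ f : EuclideanSpace ℝ (Fin d) → ℝ,
      Continuous f → HasCompactSupport f → Integrable f := fun f hf hsf =>
    hf.integrable_of_hasCompactSupport hsf
  have hIntG2 : Integrable (fun x => G x * G x) := hInt _ (hGc.mul hGc) (hsG.mul_left)
  have hIntW : Integrable W := by
    have hsW : HasCompactSupport W := by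
      have := hasCompactSupport_finset_sum (Finset.univ : Finset (Fin d))
        (fun α x => ∑ β, w α β x ^ 2) (fun α =>
          hasCompactSupport_finset_sum _ (fun β x => w α β x ^ 2)
            (fun β => (hsw α β).comp_left (g := fun t : ℝ => t ^ 2) (by simp)))
      exact this
    exact hInt _ hWc hsW
  set M : ℝ := ⨆ x, |u x| with hM_def
  have hMb : ∀ x, |u x| ≤ M := fun x =>
    le_ciSup (hu.continuous.abs.bddAbove_range_of_hasCompactSupport hc.abs) x
  have hM0 : 0 ≤ M := le_trans (abs_nonneg _) (hMb 0)
  have hve : ∀ α x, fderiv ℝ u x (e α) = v α x := fun α x => rfl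
  have hWgoal : (∫ x, ∑ α, ∑ β,
      (fderiv ℝ (fun y => fderiv ℝ u y (EuclideanSpace.single α 1)) x
        (EuclideanSpace.single β 1)) ^ 2) = ∫ x, W x := rfl
  clear_value c e v w G W D M
  -- pointwise bound on D
  have hD_le : ∀ α x, |D α x| ≤ (2 * d + 1) * (G x * Real.sqrt (W x)) := by
    intro α x
    simp only [hD_def]
    have hGW : 0 ≤ G x * Real.sqrt (W x) := mul_nonneg (hGnn x) (Real.sqrt_nonneg _)
    have key : ∀ β, |v α x * (v β x * w β α x + v β x * w β α x)|
        ≤ 2 * (G x * Real.sqrt (W x)) := by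
      intro β
      have h2 : v α x * (v β x * w β α x + v β x * w β α x)
          = 2 * ((v α x * v β x) * w β α x) := by ring
      rw [h2, abs_mul, abs_two, abs_mul]
      have hm := mul_le_mul (hv_le α β x) (hw_le β α x) (abs_nonneg _) (hGnn x)
      nlinarith
    have h1 : |v α x * (∑ β, (v β x * w β α x + v β x * w β α x))|
        ≤ 2 * d * (G x * Real.sqrt (W x)) := by
      rw [Finset.mul_sum]
      calc |∑ β, v α x * (v β x * w β α x + v β x * w β α x)|
          ≤ ∑ β, |v α x * (v β x * w β α x + v β x * w β α x)| :=
            Finset.abs_sum_le_sum_abs _ _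
        _ ≤ ∑ _β : Fin d, 2 * (G x * Real.sqrt (W x)) :=
            Finset.sum_le_sum fun β _ => key β
        _ = 2 * d * (G x * Real.sqrt (W x)) := by
            rw [Finset.sum_const, Finset.card_univ, Fintype.card_fin, nsmul_eq_mul]; ring
    have h2 : |G x * w α α x| ≤ G x * Real.sqrt (W x) := by
      rw [abs_mul, abs_of_nonneg (hGnn x)]
      exact mul_le_mul_of_nonneg_left (hw_le α α x) (hGnn x)
    calc |v α x * (∑ β, (v β x * w β α x + v β x * w β α x)) + G x * w α α x|
          ≤ |v α x * (∑ β, (v β x * w β α x + v β x * w β α x))| + |G x * w α α x| :=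
          abs_add_le _ _
      _ ≤ 2 * d * (G x * Real.sqrt (W x)) + G x * Real.sqrt (W x) := add_le_add h1 h2
      _ = (2 * d + 1) * (G x * Real.sqrt (W x)) := by ring
  -- pointwise AM-GM bound
  have hpt : ∀ x, (∑ α, D α x) * (-u x)
      ≤ G x * G x / 2 + (c ^ 2 * M ^ 2 / 2) * W x := by
    intro x
    have hGW : 0 ≤ G x * Real.sqrt (W x) := mul_nonneg (hGnn x) (Real.sqrt_nonneg _)
    have hS : |∑ α, D α x| ≤ c * (G x * Real.sqrt (W x)) := by
      calc |∑ α, D α x| ≤ ∑ α, |D α x| := Finset.abs_sum_le_sum_abs _ _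
        _ ≤ ∑ _α : Fin d, (2 * d + 1) * (G x * Real.sqrt (W x)) :=
            Finset.sum_le_sum fun α _ => hD_le α x
        _ = (d * (2 * d + 1)) * (G x * Real.sqrt (W x)) := by
            rw [Finset.sum_const, Finset.card_univ, Fintype.card_fin, nsmul_eq_mul]; ring
        _ ≤ c * (G x * Real.sqrt (W x)) := by
            apply mul_le_mul_of_nonneg_right _ hGW
            rw [hc_def]; linarith
    have h1 : (∑ α, D α x) * (-u x) ≤ |∑ α, D α x| * M := by
      calc (∑ α, D α x) * (-u x) ≤ |(∑ α, D α x) * (-u x)| := le_abs_self _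
        _ = |∑ α, D α x| * |u x| := by rw [abs_mul, abs_neg]
        _ ≤ |∑ α, D α x| * M := mul_le_mul_of_nonneg_left (hMb x) (abs_nonneg _)
    have h2 : |∑ α, D α x| * M ≤ (c * (G x * Real.sqrt (W x))) * M :=
      mul_le_mul_of_nonneg_right hS hM0
    have hW' : W x = Real.sqrt (W x) * Real.sqrt (W x) :=
      (Real.mul_self_sqrt (hWnn x)).symm
    have hsq2 : 0 ≤ (G x - c * M * Real.sqrt (W x)) ^ 2 := sq_nonneg _
    have hexp : (G x - c * M * Real.sqrt (W x)) ^ 2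
        = G x * G x - 2 * (c * (G x * Real.sqrt (W x)) * M)
          + c ^ 2 * M ^ 2 * (Real.sqrt (W x) * Real.sqrt (W x)) := by ring
    rw [hexp] at hsq2
    rw [hW']
    linarith
  -- integrability of the various products
  have hIntDu : ∀ α, Integrable (fun x => D α x * u x) := fun α =>
    hInt _ ((hDc α).mul hu.continuous) hc.mul_left
  have hIntvG : ∀ α, Integrable (fun x => v α x * v α x * G x) := fun α =>
    hInt _ (((hvc α).mul (hvc α)).mul hGc) hsG.mul_left
  -- integration by parts
  have ibp : ∀ α, ∫ x, v α x * v α x * G x = - ∫ x, D α x * u x := by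
    intro α
    have h1 : ∫ x, (v α x * G x) * fderiv ℝ u x (e α)
        = - ∫ x, fderiv ℝ (fun y => v α y * G y) x (e α) * u x := by
      apply integral_mul_fderiv_eq_neg_fderiv_mul_of_integrable
      · have heq : (fun x => fderiv ℝ (fun y => v α y * G y) x (e α) * u x)
            = fun x => D α x * u x := funext fun x => by rw [hfderivP α x]
        rw [heq]; exact hIntDu α
      · have heq : (fun x => (v α x * G x) * fderiv ℝ u x (e α))
            = fun x => v α x * v α x * G x := funext fun x => by rw [hve α x]; ring
        rw [heq]; exact hIntvG α
      · exact hInt _ (((hvc α).mul hGc).mul hu.continuous) hc.mul_left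
      · exact fun x _ => hPd α x
      · exact fun x _ => hud x
    have h2 : (fun x => (v α x * G x) * fderiv ℝ u x (e α))
        = fun x => v α x * v α x * G x := funext fun x => by rw [hve α x]; ring
    have h3 : (fun x => fderiv ℝ (fun y => v α y * G y) x (e α) * u x)
        = fun x => D α x * u x := funext fun x => by rw [hfderivP α x]
    rw [h2, h3] at h1
    exact h1
  have hIntS : Integrable (fun x => (∑ α, D α x) * (-u x)) :=
    hInt _ ((continuous_finset_sum _ fun α _ => hDc α).mul hu.continuous.neg)
      ((hc.comp_left (g := fun t : ℝ => -t) (by simp)).mul_left)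
  -- chain of identities
  have step1 : ∫ x, ‖fderiv ℝ u x‖ ^ 4 = ∫ x, G x * G x := by
    congr 1; funext x
    rw [show (4:ℕ) = 2 * 2 from rfl, pow_mul, hG_norm x, sq]
  have step2 : ∫ x, G x * G x = ∑ α, ∫ x, v α x * v α x * G x := by
    rw [← integral_finset_sum _ fun α _ => hIntvG α]
    congr 1; funext x
    simp only [hG_def]
    rw [← Finset.sum_mul]
  have step3 : ∑ α, ∫ x, v α x * v α x * G x = ∫ x, (∑ α, D α x) * (-u x) := by
    calc ∑ α, ∫ x, v α x * v α x * G x = ∑ α, - ∫ x, D α x * u x :=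
          Finset.sum_congr rfl fun α _ => ibp α
      _ = - ∑ α, ∫ x, D α x * u x := by rw [← Finset.sum_neg_distrib]
      _ = - ∫ x, ∑ α, D α x * u x := by rw [integral_finset_sum _ fun α _ => hIntDu α]
      _ = ∫ x, (∑ α, D α x) * (-u x) := by
          rw [← integral_neg]; congr 1; funext x
          rw [← Finset.sum_mul]; ring
  have step4 : ∫ x, (∑ α, D α x) * (-u x)
      ≤ ∫ x, (G x * G x / 2 + (c ^ 2 * M ^ 2 / 2) * W x) :=
    integral_mono hIntS ((hIntG2.div_const 2).add (hIntW.const_mul _)) fun x => hpt x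
  have hB : 0 ≤ ∫ x, W x := integral_nonneg fun x => hWnn x
  have hA : ∫ x, G x * G x ≤ c ^ 2 * M ^ 2 * ∫ x, W x := by
    have h := step4
    rw [integral_add (hIntG2.div_const 2) (hIntW.const_mul _), integral_div,
      integral_const_mul] at h
    have hAA : ∫ x, G x * G x = ∫ x, (∑ α, D α x) * (-u x) := step2.trans step3
    linarith
  rw [step1]
  exact hA
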